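/- Let f ∈ ℂ[[t]] with f(0)=0, f'(0)=1, f''(0)=0 satisfy the Atiyah-flop relation: f(s₁-s₂)f(s₂-s₁)f(t₁-t₂)f(s₁+t₂)f(s₂+t₂) + f(s₁-s₂)f(s₂-s₁)f(t₂-t₁)f(s₁+t₁)f(s₂+t₁) - f(s₂-s₁)f(t₁-t₂)f(t₂-t₁)f(s₁+t₁)f(s₁+t₂) - f(s₁-s₂)f(t₁-t₂)f(t₂-t₁)f(s₂+t₁)f(s₂+t₂) = 0 in ℂ[[s₁,s₂,t₁,t₂]]. Then f satisfies 4f(-t)(2f'(t)² - f⁽³⁾(0)f(t)² - f(t)f''(t)) + 8f(t) = 0. -/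

import Mathlib

/-!
STATEMENT 13: If `f ∈ ℂ[[t]]` with `f(0)=0`, `f'(0)=1`, `f''(0)=0` satisfies the
Atiyah-flop relation
`f(s₁-s₂)f(s₂-s₁)f(t₁-t₂)f(s₁+t₂)f(s₂+t₂) + f(s₁-s₂)f(s₂-s₁)f(t₂-t₁)f(s₁+t₁)f(s₂+t₁)
 - f(s₂-s₁)f(t₁-t₂)f(t₂-t₁)f(s₁+t₁)f(s₁+t₂) - f(s₁-s₂)f(t₁-t₂)f(t₂-t₁)f(s₂+t₁)f(s₂+t₂) = 0`
in ℂ[[s₁,s₂,t₁,t₂]], then `4f(-t)(2f'(t)² - f⁽³⁾(0)f(t)² - f(t)f''(t)) + 8f(t) = 0`.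
Variables are ordered `(s₁, s₂, t₁, t₂)`; `f⁽³⁾(0) = 3!·coeff 3 f`.
-/

/-- Composition `f(∑ cᵢ·xᵢ)` with a linear form in four variables. -/
noncomputable def linSub (c : Fin 4 → ℂ) (f : PowerSeries ℂ) : MvPowerSeries (Fin 4) ℂ :=
  fun d => PowerSeries.coeff (∑ i, d i) f * (Nat.multinomial Finset.univ d : ℂ) *
    ∏ i, c i ^ d i

/-- `k`-th formal derivative of a power series. -/
noncomputable def Dn {R : Type*} [CommRing R] (k : ℕ) (f : PowerSeries R) : PowerSeries R :=
  (PowerSeries.derivativeFun (R := R))^[k] f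


section AuxStmt13
open PowerSeries

/-- index (i,j,0,n) as a Finsupp on Fin 4 -/
noncomputable def sig (i j n : ℕ) : Fin 4 →₀ ℕ :=
  Finsupp.single 0 i + Finsupp.single 1 j + Finsupp.single 3 n

@[simp] lemma sig_0 (i j n : ℕ) : sig i j n 0 = i := by
  simp [sig, Finsupp.single_apply]
@[simp] lemma sig_1 (i j n : ℕ) : sig i j n 1 = j := by
  simp [sig, Finsupp.single_apply]
@[simp] lemma sig_2 (i j n : ℕ) : sig i j n 2 = 0 := by
  simp [sig, Finsupp.single_apply]
@[simp] lemma sig_3 (i j n : ℕ) : sig i j n 3 = n := by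
  simp [sig, Finsupp.single_apply]

lemma sig_add (i j n i' j' n' : ℕ) :
    sig i j n + sig i' j' n' = sig (i+i') (j+j') (n+n') := by
  ext k; fin_cases k <;> simp

lemma eq_sig (u : Fin 4 →₀ ℕ) (h : u 2 = 0) : u = sig (u 0) (u 1) (u 3) := by
  ext k; fin_cases k <;> simp [h]

lemma multinomial_sig (i j n : ℕ) :
    Nat.multinomial Finset.univ (sig i j n) = (i+j+n).choose i * (j+n).choose j := by
  have huniv : (Finset.univ : Finset (Fin 4)) = insert 0 (insert 1 (insert 2 {3})) := by decide
  rw [huniv, Nat.multinomial_insert (by decide), Nat.multinomial_insert (by decide),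
    Nat.multinomial_insert (by decide), Nat.multinomial_singleton]
  simp [Finset.sum_insert, Nat.add_assoc]

/-- extraction: coefficient of s₁^i s₂^j t₁^0 t₂^n as a power series in t₂ -/
noncomputable def EE (i j : ℕ) (g : MvPowerSeries (Fin 4) ℂ) : PowerSeries ℂ :=
  PowerSeries.mk fun n => MvPowerSeries.coeff (sig i j n) g

lemma coeff_EE (i j n : ℕ) (g : MvPowerSeries (Fin 4) ℂ) :
    PowerSeries.coeff n (EE i j g) = MvPowerSeries.coeff (sig i j n) g :=
  PowerSeries.coeff_mk _ _

lemma EE_add (i j : ℕ) (g h : MvPowerSeries (Fin 4) ℂ) :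
    EE i j (g + h) = EE i j g + EE i j h := by
  ext n; simp [coeff_EE]

lemma EE_sub (i j : ℕ) (g h : MvPowerSeries (Fin 4) ℂ) :
    EE i j (g - h) = EE i j g - EE i j h := by
  ext n; simp [coeff_EE]

lemma EE_zero (i j : ℕ) : EE i j (0 : MvPowerSeries (Fin 4) ℂ) = 0 := by
  ext n; simp [coeff_EE]

lemma EE_mul (i j : ℕ) (g h : MvPowerSeries (Fin 4) ℂ) :
    EE i j (g * h) =
      ∑ p ∈ Finset.HasAntidiagonal.antidiagonal i, ∑ q ∈ Finset.HasAntidiagonal.antidiagonal j,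
        EE p.1 q.1 g * EE p.2 q.2 h := by
  ext n
  have hrhs : (PowerSeries.coeff n)
        (∑ p ∈ Finset.HasAntidiagonal.antidiagonal i, ∑ q ∈ Finset.HasAntidiagonal.antidiagonal j,
          EE p.1 q.1 g * EE p.2 q.2 h)
      = ∑ p ∈ Finset.HasAntidiagonal.antidiagonal i, ∑ q ∈ Finset.HasAntidiagonal.antidiagonal j,
          ∑ m ∈ Finset.HasAntidiagonal.antidiagonal n,
            MvPowerSeries.coeff (sig p.1 q.1 m.1) g *
              MvPowerSeries.coeff (sig p.2 q.2 m.2) h := by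
    rw [map_sum]
    refine Finset.sum_congr rfl fun p _ => ?_
    rw [map_sum]
    refine Finset.sum_congr rfl fun q _ => ?_
    rw [PowerSeries.coeff_mul]
    exact Finset.sum_congr rfl fun m _ => by rw [coeff_EE, coeff_EE]
  rw [hrhs, coeff_EE, MvPowerSeries.coeff_mul]
  have hmerge :
      (∑ p ∈ Finset.HasAntidiagonal.antidiagonal i, ∑ q ∈ Finset.HasAntidiagonal.antidiagonal j,
          ∑ m ∈ Finset.HasAntidiagonal.antidiagonal n,
            MvPowerSeries.coeff (sig p.1 q.1 m.1) g *
              MvPowerSeries.coeff (sig p.2 q.2 m.2) h)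
      = ∑ z ∈ Finset.HasAntidiagonal.antidiagonal i ×ˢ (Finset.HasAntidiagonal.antidiagonal j ×ˢ Finset.HasAntidiagonal.antidiagonal n),
          MvPowerSeries.coeff (sig z.1.1 z.2.1.1 z.2.2.1) g *
            MvPowerSeries.coeff (sig z.1.2 z.2.1.2 z.2.2.2) h := by
    rw [Finset.sum_product]
    refine Finset.sum_congr rfl fun p _ => ?_
    rw [Finset.sum_product]
  rw [hmerge]
  refine Finset.sum_bij'
    (fun uv _ => ((uv.1 0, uv.2 0), ((uv.1 1, uv.2 1), (uv.1 3, uv.2 3))))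
    (fun z _ => (sig z.1.1 z.2.1.1 z.2.2.1, sig z.1.2 z.2.1.2 z.2.2.2))
    ?_ ?_ ?_ ?_ ?_
  · intro uv huv
    rw [Finset.HasAntidiagonal.mem_antidiagonal] at huv
    have h0 := DFunLike.congr_fun huv 0
    have h1 := DFunLike.congr_fun huv 1
    have h3 := DFunLike.congr_fun huv 3
    simp only [Finsupp.add_apply, sig_0, sig_1, sig_3] at h0 h1 h3
    simp [Finset.mem_product, Finset.HasAntidiagonal.mem_antidiagonal, h0, h1, h3]
  · intro z hz
    simp only [Finset.mem_product, Finset.HasAntidiagonal.mem_antidiagonal] at hz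
    rw [Finset.HasAntidiagonal.mem_antidiagonal, sig_add, hz.1, hz.2.1, hz.2.2]
  · intro uv huv
    rw [Finset.HasAntidiagonal.mem_antidiagonal] at huv
    have h2 := DFunLike.congr_fun huv 2
    simp only [Finsupp.add_apply, sig_2] at h2
    have hu2 : uv.1 2 = 0 := by omega
    have hv2 : uv.2 2 = 0 := by omega
    exact Prod.ext (eq_sig _ hu2).symm (eq_sig _ hv2).symm
  · intro z hz
    simp
  · intro uv huv
    rw [Finset.HasAntidiagonal.mem_antidiagonal] at huv
    have h2 := DFunLike.congr_fun huv 2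
    simp only [Finsupp.add_apply, sig_2] at h2
    have hu2 : uv.1 2 = 0 := by omega
    have hv2 : uv.2 2 = 0 := by omega
    rw [← eq_sig _ hu2, ← eq_sig _ hv2]

lemma coeff_EE_linSub (c : Fin 4 → ℂ) (f : PowerSeries ℂ) (i j n : ℕ) :
    PowerSeries.coeff n (EE i j (linSub c f)) =
      PowerSeries.coeff (i+j+n) f *
        (((i+j+n).choose i : ℂ) * ((j+n).choose j : ℂ)) *
        (c 0 ^ i * c 1 ^ j * c 3 ^ n) := by
  rw [coeff_EE]
  show (linSub c f) (sig i j n) = _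
  unfold linSub
  rw [Fin.sum_univ_four, Fin.prod_univ_four, multinomial_sig]
  simp
  try ring

lemma coeff_derivativeFun' (f : PowerSeries ℂ) (n : ℕ) :
    PowerSeries.coeff n f.derivativeFun = PowerSeries.coeff (n + 1) f * (n + 1) :=
  PowerSeries.coeff_derivative f n

/-- auxiliary series: `i`-th divided derivative -/
noncomputable def dd (f : PowerSeries ℂ) (i : ℕ) : PowerSeries ℂ :=
  PowerSeries.mk fun n => ((i+n).choose i : ℂ) * PowerSeries.coeff (i+n) f

lemma dd_zero (f : PowerSeries ℂ) : dd f 0 = f := by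
  ext n; simp [dd]

lemma dd_one (f : PowerSeries ℂ) : dd f 1 = Dn 1 f := by
  ext n
  simp [dd, Dn, coeff_derivativeFun', Nat.add_comm 1 n]
  ring

lemma two_mul_choose_two (n : ℕ) : 2 * (n+2).choose 2 = (n+2)*(n+1) := by
  induction n with
  | zero => rfl
  | succ m ih =>
      have h : (m+3).choose 2 = (m+2).choose 1 + (m+2).choose 2 := Nat.choose_succ_succ (m+2) 1
      rw [Nat.choose_one_right] at h
      rw [show m+1+2 = m+3 from rfl, h, Nat.mul_add, ih]
      ring

lemma dd_two (f : PowerSeries ℂ) : dd f 2 = PowerSeries.C (2⁻¹ : ℂ) * Dn 2 f := by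
  ext n
  rw [PowerSeries.coeff_C_mul]
  have h2 : Dn 2 f = PowerSeries.derivativeFun (PowerSeries.derivativeFun f) := by
    show (PowerSeries.derivativeFun)^[2] f = _
    rw [Function.iterate_succ_apply', Function.iterate_one]
  rw [h2, coeff_derivativeFun', coeff_derivativeFun']
  have hc : ((2+n).choose 2 : ℂ) = 2⁻¹ * ((n+2) * (n+1)) := by
    have := congrArg (Nat.cast : ℕ → ℂ) (two_mul_choose_two n)
    push_cast at this
    rw [Nat.add_comm 2 n] at *
    field_simp
    linear_combination this
  simp only [dd, PowerSeries.coeff_mk, hc]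
  rw [show 2+n = n+1+1 from by ring]
  push_cast
  ring

lemma EE_G1 (f : PowerSeries ℂ) (i j : ℕ) :
    EE i j (linSub ![1,-1,0,0] f) =
      PowerSeries.C ((-1)^j * ((i+j).choose i : ℂ) * PowerSeries.coeff (i+j) f) := by
  ext n
  rw [coeff_EE_linSub, PowerSeries.coeff_C]
  rcases n with _|n
  · simp; ring
  · simp

lemma EE_G2 (f : PowerSeries ℂ) (i j : ℕ) :
    EE i j (linSub ![-1,1,0,0] f) =
      PowerSeries.C ((-1)^i * ((i+j).choose i : ℂ) * PowerSeries.coeff (i+j) f) := by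
  ext n
  rw [coeff_EE_linSub, PowerSeries.coeff_C]
  rcases n with _|n
  · simp; ring
  · simp

lemma EE_G3 (f : PowerSeries ℂ) (i j : ℕ) :
    EE i j (linSub ![0,0,1,-1] f) =
      if i = 0 ∧ j = 0 then PowerSeries.rescale (-1) f else 0 := by
  ext n
  rw [coeff_EE_linSub]
  by_cases hi : i = 0
  · by_cases hj : j = 0
    · subst hi; subst hj
      simp [PowerSeries.coeff_rescale]
      ring
    · subst hi; simp [hj, zero_pow]
  · simp [hi, zero_pow]

lemma EE_G6 (f : PowerSeries ℂ) (i j : ℕ) :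
    EE i j (linSub ![0,0,-1,1] f) =
      if i = 0 ∧ j = 0 then f else 0 := by
  ext n
  rw [coeff_EE_linSub]
  by_cases hi : i = 0
  · by_cases hj : j = 0
    · subst hi; subst hj; simp
    · subst hi; simp [hj, zero_pow]
  · simp [hi, zero_pow]

lemma EE_G4 (f : PowerSeries ℂ) (i j : ℕ) :
    EE i j (linSub ![1,0,0,1] f) = if j = 0 then dd f i else 0 := by
  ext n
  rw [coeff_EE_linSub]
  by_cases hj : j = 0
  · subst hj
    simp [dd, Nat.add_comm i n]
    ring
  · simp [hj, zero_pow]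

lemma EE_G5 (f : PowerSeries ℂ) (i j : ℕ) :
    EE i j (linSub ![0,1,0,1] f) = if i = 0 then dd f j else 0 := by
  ext n
  rw [coeff_EE_linSub]
  by_cases hi : i = 0
  · subst hi
    simp [dd, Nat.add_comm j n]
    ring
  · simp [hi, zero_pow]

lemma EE_G7 (f : PowerSeries ℂ) (i j : ℕ) :
    EE i j (linSub ![1,0,1,0] f) =
      if j = 0 then PowerSeries.C (PowerSeries.coeff i f) else 0 := by
  ext n
  rw [coeff_EE_linSub]
  by_cases hj : j = 0
  · subst hj
    rw [if_pos rfl, PowerSeries.coeff_C]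
    rcases n with _|n
    · simp
    · simp
  · simp [hj, zero_pow]

lemma EE_G8 (f : PowerSeries ℂ) (i j : ℕ) :
    EE i j (linSub ![0,1,1,0] f) =
      if i = 0 then PowerSeries.C (PowerSeries.coeff j f) else 0 := by
  ext n
  rw [coeff_EE_linSub]
  by_cases hi : i = 0
  · subst hi
    rw [if_pos rfl, PowerSeries.coeff_C]
    rcases n with _|n
    · simp
    · simp
  · simp [hi, zero_pow]

lemma Dn_two_eq (f : PowerSeries ℂ) : Dn 2 f = 2 * dd f 2 := by
  ext n
  have hD : Dn 2 f = PowerSeries.derivativeFun (PowerSeries.derivativeFun f) := by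
    show (PowerSeries.derivativeFun)^[2] f = _
    rw [Function.iterate_succ_apply', Function.iterate_one]
  have h2C : (2 : PowerSeries ℂ) = PowerSeries.C 2 := by
    simp [map_ofNat]
  rw [hD, coeff_derivativeFun', coeff_derivativeFun', h2C,
    PowerSeries.coeff_C_mul]
  simp only [dd, PowerSeries.coeff_mk]
  have hc := congrArg (Nat.cast : ℕ → ℂ) (two_mul_choose_two n)
  push_cast at hc
  rw [show 2+n = n+1+1 from by ring]
  push_cast
  linear_combination (-(PowerSeries.coeff (n+1+1) f)) * hc

set_option maxHeartbeats 2000000 in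
lemma LA (f : PowerSeries ℂ)
    (h0 : PowerSeries.constantCoeff f = 0)
    (h1 : PowerSeries.coeff 1 f = 1)
    (h2 : PowerSeries.coeff 2 f = 0) :
    EE 2 2 (linSub ![1,-1,0,0] f * linSub ![-1,1,0,0] f * linSub ![0,0,1,-1] f
          * linSub ![1,0,0,1] f * linSub ![0,1,0,1] f)
      = PowerSeries.rescale (-1) f *
          (2 * dd f 1 ^ 2 - 2 * (f * dd f 2)
            - 12 * PowerSeries.C (PowerSeries.coeff 3 f) * f ^ 2) := by
  simp only [EE_mul]
  simp only [Finset.Nat.sum_antidiagonal_eq_sum_range_succ_mk]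
  simp only [Finset.sum_range_succ, Finset.sum_range_zero]
  norm_num [EE_G1, EE_G2, EE_G3, EE_G4, EE_G5]
  simp only [h0, h1, h2, map_zero, map_one, map_ofNat, Nat.choose, Nat.cast_ofNat]
  norm_num [dd_zero]
  ring

set_option maxHeartbeats 2000000 in
lemma LB (f : PowerSeries ℂ)
    (h0 : PowerSeries.constantCoeff f = 0)
    (h1 : PowerSeries.coeff 1 f = 1)
    (h2 : PowerSeries.coeff 2 f = 0) :
    EE 2 2 (linSub ![1,-1,0,0] f * linSub ![-1,1,0,0] f * linSub ![0,0,-1,1] f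
          * linSub ![1,0,1,0] f * linSub ![0,1,1,0] f)
      = 2 * f := by
  simp only [EE_mul]
  simp only [Finset.Nat.sum_antidiagonal_eq_sum_range_succ_mk]
  simp only [Finset.sum_range_succ, Finset.sum_range_zero]
  norm_num [EE_G1, EE_G2, EE_G6, EE_G7, EE_G8]
  simp only [h0, h1, h2, map_zero, map_one, map_ofNat, Nat.choose, Nat.cast_ofNat]
  norm_num
  try ring

set_option maxHeartbeats 2000000 in
lemma LC (f : PowerSeries ℂ)
    (h0 : PowerSeries.constantCoeff f = 0)
    (h1 : PowerSeries.coeff 1 f = 1)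
    (h2 : PowerSeries.coeff 2 f = 0) :
    EE 2 2 (linSub ![-1,1,0,0] f * linSub ![0,0,1,-1] f * linSub ![0,0,-1,1] f
          * linSub ![1,0,1,0] f * linSub ![1,0,0,1] f)
      = -3 * PowerSeries.C (PowerSeries.coeff 3 f) * PowerSeries.rescale (-1) f * f ^ 2 := by
  simp only [EE_mul]
  simp only [Finset.Nat.sum_antidiagonal_eq_sum_range_succ_mk]
  simp only [Finset.sum_range_succ, Finset.sum_range_zero]
  norm_num [EE_G2, EE_G3, EE_G6, EE_G7, EE_G4]
  simp only [h0, h1, h2, map_zero, map_one, map_ofNat, Nat.choose, Nat.cast_ofNat]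
  norm_num [dd_zero]
  try ring

set_option maxHeartbeats 2000000 in
lemma LD (f : PowerSeries ℂ)
    (h0 : PowerSeries.constantCoeff f = 0)
    (h1 : PowerSeries.coeff 1 f = 1)
    (h2 : PowerSeries.coeff 2 f = 0) :
    EE 2 2 (linSub ![1,-1,0,0] f * linSub ![0,0,1,-1] f * linSub ![0,0,-1,1] f
          * linSub ![0,1,1,0] f * linSub ![0,1,0,1] f)
      = -3 * PowerSeries.C (PowerSeries.coeff 3 f) * PowerSeries.rescale (-1) f * f ^ 2 := by
  simp only [EE_mul]
  simp only [Finset.Nat.sum_antidiagonal_eq_sum_range_succ_mk]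
  simp only [Finset.sum_range_succ, Finset.sum_range_zero]
  norm_num [EE_G1, EE_G3, EE_G6, EE_G8, EE_G5]
  simp only [h0, h1, h2, map_zero, map_one, map_ofNat, Nat.choose, Nat.cast_ofNat]
  norm_num [dd_zero]
  try ring


end AuxStmt13

theorem stmt13 (f : PowerSeries ℂ)
    (h0 : PowerSeries.constantCoeff f = 0)
    (h1 : PowerSeries.coeff 1 f = 1)
    (h2 : PowerSeries.coeff 2 f = 0)
    (hrel :
      linSub ![1,-1,0,0] f * linSub ![-1,1,0,0] f * linSub ![0,0,1,-1] f
          * linSub ![1,0,0,1] f * linSub ![0,1,0,1] f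
        + linSub ![1,-1,0,0] f * linSub ![-1,1,0,0] f * linSub ![0,0,-1,1] f
          * linSub ![1,0,1,0] f * linSub ![0,1,1,0] f
        - linSub ![-1,1,0,0] f * linSub ![0,0,1,-1] f * linSub ![0,0,-1,1] f
          * linSub ![1,0,1,0] f * linSub ![1,0,0,1] f
        - linSub ![1,-1,0,0] f * linSub ![0,0,1,-1] f * linSub ![0,0,-1,1] f
          * linSub ![0,1,1,0] f * linSub ![0,1,0,1] f
        = 0) :
    4 * PowerSeries.rescale (-1) f
        * (2 * (Dn 1 f) ^ 2 - PowerSeries.C (6 * PowerSeries.coeff 3 f) * f ^ 2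
            - f * Dn 2 f)
      + 8 * f = 0 := by
  have hE := congrArg (EE 2 2) hrel
  rw [EE_sub, EE_sub, EE_add, EE_zero, LA f h0 h1 h2, LB f h0 h1 h2,
    LC f h0 h1 h2, LD f h0 h1 h2] at hE
  rw [show Dn 1 f = dd f 1 from (dd_one f).symm, Dn_two_eq]
  simp only [map_mul, map_ofNat]
  linear_combination 4 * hE
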